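/- For every n ≥ 0 and every x ∈ D, setting A := K_n + σ² I_n, u := k_n(x_{n+1}), v := k_n(x), α := κ(x_{n+1}, x), and s := σ² + σ_n²(x_{n+1}), the quadratic form with the block-inverted regularized kernel matrix satisfies k_{n+1}(x)ᵀ (K_{n+1} + σ² I_{n+1})⁻¹ k_{n+1}(x) = vᵀ A⁻¹ v + (α − uᵀ A⁻¹ v)² / s, where k_{n+1}(x) is the concatenation of v and the scalar α. -/

import Mathlib

open Matrix

/-- The `n × n` kernel matrix `K_n = [κ(x_i, x_j)]` built from the first `n`
points of the sequence `xs` (zero-indexed: `xs 0 = x_1`). -/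
noncomputable def kerMat {D : Type*} (κ : D → D → ℝ) (xs : ℕ → D) (n : ℕ) :
    Matrix (Fin n) (Fin n) ℝ :=
  Matrix.of fun i j => κ (xs i) (xs j)

/-- The kernel vector `k_n(x) = [κ(x_i, x)]_{i=1}^n`. -/
noncomputable def kerVec {D : Type*} (κ : D → D → ℝ) (xs : ℕ → D) (n : ℕ) (y : D) :
    Fin n → ℝ :=
  fun i => κ (xs i) y

/-- The posterior variance
`σ_n²(x) = κ(x,x) − k_n(x)ᵀ (K_n + σ² I_n)⁻¹ k_n(x)`;
for `n = 0` this is `κ(x,x)`. -/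
noncomputable def postVar {D : Type*} (κ : D → D → ℝ) (xs : ℕ → D) (σ2 : ℝ)
    (n : ℕ) (y : D) : ℝ :=
  κ y y -
    kerVec κ xs n y ⬝ᵥ
      ((kerMat κ xs n + σ2 • (1 : Matrix (Fin n) (Fin n) ℝ))⁻¹ *ᵥ kerVec κ xs n y)


/-!
Write `K_{n+1} + σ² I` as the bordering of `A = K_n + σ² I` by `u = k_n(x_{n+1})` and
`d = κ(x_{n+1}, x_{n+1}) + σ²`. Block elimination solves `(K_{n+1} + σ² I) z = (v, α)` by
`z = (A⁻¹ v - β A⁻¹ u, β)` with `β = (α - uᵀ A⁻¹ v) / s`, where `s = d - uᵀ A⁻¹ u = σ² + σ_n²(x_{n+1})`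
is the Schur complement. Pairing `z` with `(v, α)` and using the symmetry of `A⁻¹` gives the formula.
-/

namespace Matrix

variable {R : Type*} {n : ℕ}

/-- The symmetric bordering `[[A, u], [uᵀ, d]]` of a square matrix `A`. -/
def border (A : Matrix (Fin n) (Fin n) R) (u : Fin n → R) (d : R) :
    Matrix (Fin (n + 1)) (Fin (n + 1)) R :=
  of fun i j => Fin.lastCases (Fin.lastCases d u j) (fun i => Fin.lastCases (u i) (A i) j) i

variable {A : Matrix (Fin n) (Fin n) R} {u : Fin n → R} {d : R}

@[simp]
lemma border_castSucc_castSucc (i j : Fin n) : border A u d i.castSucc j.castSucc = A i j := by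
  simp [border]

@[simp]
lemma border_castSucc_last (i : Fin n) : border A u d i.castSucc (Fin.last n) = u i := by
  simp [border]

@[simp]
lemma border_last_castSucc (j : Fin n) : border A u d (Fin.last n) j.castSucc = u j := by
  simp [border]

@[simp]
lemma border_last_last : border A u d (Fin.last n) (Fin.last n) = d := by
  simp [border]

section CommRing

variable [CommRing R]

lemma snoc_dotProduct_snoc (p q : Fin n → R) (a b : R) :
    Fin.snoc p a ⬝ᵥ Fin.snoc q b = p ⬝ᵥ q + a * b := by
  simp [dotProduct, Fin.sum_univ_castSucc]

lemma border_mulVec_snoc (p : Fin n → R) (t : R) :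
    border A u d *ᵥ Fin.snoc p t = Fin.snoc (A *ᵥ p + t • u) (u ⬝ᵥ p + t * d) := by
  funext i
  induction i using Fin.lastCases with
  | last => simp [mulVec, dotProduct, Fin.sum_univ_castSucc, mul_comm]
  | cast i => simp [mulVec, dotProduct, Fin.sum_univ_castSucc, mul_comm]

end CommRing

section Field

variable {K : Type*} [Field K] {A : Matrix (Fin n) (Fin n) K} {u : Fin n → K} {d : K}

lemma mulVec_inv_mulVec (hA : IsUnit A) (v : Fin n → K) : A *ᵥ (A⁻¹ *ᵥ v) = v := by
  rw [mulVec_mulVec, mul_nonsing_inv _ ((isUnit_iff_isUnit_det A).mp hA), one_mulVec]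

lemma IsSymm.dotProduct_inv_mulVec_comm (hA : A.IsSymm) (v w : Fin n → K) :
    v ⬝ᵥ (A⁻¹ *ᵥ w) = w ⬝ᵥ (A⁻¹ *ᵥ v) := by
  rw [dotProduct_mulVec, ← vecMul_transpose, hA.inv.eq, dotProduct_comm]

/-- Otherwise `border A u d` would kill `(-A⁻¹ u, 1)`. -/
lemma border_schur_ne_zero (hA : IsUnit A) (hM : IsUnit (border A u d)) :
    d - u ⬝ᵥ (A⁻¹ *ᵥ u) ≠ 0 := by
  intro hs
  have hker : border A u d *ᵥ Fin.snoc (-(A⁻¹ *ᵥ u)) 1 = border A u d *ᵥ 0 := by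
    rw [border_mulVec_snoc, mulVec_neg, mulVec_inv_mulVec hA, mulVec_zero, dotProduct_neg]
    funext i
    induction i using Fin.lastCases with
    | last => simp [← hs, sub_eq_neg_add]
    | cast i => simp
  have := congrFun (mulVec_injective_iff_isUnit.mpr hM hker) (Fin.last n)
  simp at this

lemma border_mulVec_snoc_eq (hA : IsUnit A) {v : Fin n → K} {α β : K}
    (hβ : β * (d - u ⬝ᵥ (A⁻¹ *ᵥ u)) = α - u ⬝ᵥ (A⁻¹ *ᵥ v)) :
    border A u d *ᵥ Fin.snoc (A⁻¹ *ᵥ v - β • (A⁻¹ *ᵥ u)) β = Fin.snoc v α := by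
  rw [border_mulVec_snoc, mulVec_sub, mulVec_smul, mulVec_inv_mulVec hA, mulVec_inv_mulVec hA,
    sub_add_cancel, dotProduct_sub, dotProduct_smul, smul_eq_mul]
  congr 1
  linear_combination hβ

theorem IsSymm.snoc_dotProduct_border_inv_mulVec_snoc (hAs : A.IsSymm) (hA : IsUnit A)
    (hM : IsUnit (border A u d)) (v : Fin n → K) (α : K) :
    Fin.snoc v α ⬝ᵥ ((border A u d)⁻¹ *ᵥ Fin.snoc v α) =
      v ⬝ᵥ (A⁻¹ *ᵥ v) + (α - u ⬝ᵥ (A⁻¹ *ᵥ v)) ^ 2 / (d - u ⬝ᵥ (A⁻¹ *ᵥ u)) := by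
  set s := d - u ⬝ᵥ (A⁻¹ *ᵥ u)
  have hs : s ≠ 0 := border_schur_ne_zero hA hM
  set β := (α - u ⬝ᵥ (A⁻¹ *ᵥ v)) / s
  have hsol : (border A u d)⁻¹ *ᵥ Fin.snoc v α = Fin.snoc (A⁻¹ *ᵥ v - β • (A⁻¹ *ᵥ u)) β := by
    rw [← border_mulVec_snoc_eq hA (div_mul_cancel₀ _ hs), mulVec_mulVec,
      nonsing_inv_mul _ ((isUnit_iff_isUnit_det _).mp hM), one_mulVec]
  rw [hsol, snoc_dotProduct_snoc, dotProduct_sub, dotProduct_smul, smul_eq_mul,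
    hAs.dotProduct_inv_mulVec_comm v u, sq, mul_div_right_comm]
  ring

end Field

end Matrix

lemma kerVec_succ {D : Type*} (κ : D → D → ℝ) (xs : ℕ → D) (n : ℕ) (y : D) :
    kerVec κ xs (n + 1) y = Fin.snoc (kerVec κ xs n y) (κ (xs n) y) := by
  funext i
  induction i using Fin.lastCases with
  | last => simp [kerVec]
  | cast i => simp [kerVec]

lemma kerMat_succ_add_smul_one {D : Type*} (κ : D → D → ℝ) (hsymm : ∀ a b : D, κ a b = κ b a)
    (xs : ℕ → D) (σ2 : ℝ) (n : ℕ) :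
    kerMat κ xs (n + 1) + σ2 • (1 : Matrix (Fin (n + 1)) (Fin (n + 1)) ℝ) =
      (kerMat κ xs n + σ2 • (1 : Matrix (Fin n) (Fin n) ℝ)).border
        (kerVec κ xs n (xs n)) (κ (xs n) (xs n) + σ2) := by
  ext i j
  induction i using Fin.lastCases with
  | last =>
    induction j using Fin.lastCases with
    | last => simp [kerMat]
    | cast j => simp [kerMat, kerVec, hsymm (xs n), one_apply, (Fin.castSucc_lt_last j).ne']
  | cast i =>
    induction j using Fin.lastCases with
    | last => simp [kerMat, kerVec, one_apply, (Fin.castSucc_lt_last i).ne]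
    | cast j => simp [kerMat, one_apply]

lemma kerMat_add_smul_one_posDef {D : Type*} (κ : D → D → ℝ)
    (hpsd : ∀ (n : ℕ) (z : Fin n → D), (Matrix.of fun i j => κ (z i) (z j)).PosSemidef)
    (xs : ℕ → D) {σ2 : ℝ} (hσ2 : 0 < σ2) (n : ℕ) :
    (kerMat κ xs n + σ2 • (1 : Matrix (Fin n) (Fin n) ℝ)).PosDef :=
  PosDef.posSemidef_add (hpsd n fun i => xs i) (PosDef.one.smul hσ2)

theorem quadratic_form_block_inverse_general {D : Type*}
    (κ : D → D → ℝ)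
    (hsymm : ∀ a b : D, κ a b = κ b a)
    (hpsd : ∀ (n : ℕ) (z : Fin n → D),
      (Matrix.of fun i j => κ (z i) (z j)).PosSemidef)
    (σ2 : ℝ) (hσ2 : 0 < σ2)
    (xs : ℕ → D) (n : ℕ) (y : D) :
    kerVec κ xs (n + 1) y ⬝ᵥ
        ((kerMat κ xs (n + 1) + σ2 • (1 : Matrix (Fin (n + 1)) (Fin (n + 1)) ℝ))⁻¹ *ᵥ
          kerVec κ xs (n + 1) y) =
      kerVec κ xs n y ⬝ᵥ
          ((kerMat κ xs n + σ2 • (1 : Matrix (Fin n) (Fin n) ℝ))⁻¹ *ᵥ kerVec κ xs n y) +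
        (κ (xs n) y -
            kerVec κ xs n (xs n) ⬝ᵥ
              ((kerMat κ xs n + σ2 • (1 : Matrix (Fin n) (Fin n) ℝ))⁻¹ *ᵥ
                kerVec κ xs n y)) ^ 2 /
          (σ2 + postVar κ xs σ2 n (xs n)) := by
  have hA := kerMat_add_smul_one_posDef κ hpsd xs hσ2 n
  have hM := kerMat_add_smul_one_posDef κ hpsd xs hσ2 (n + 1)
  rw [kerMat_succ_add_smul_one κ hsymm xs σ2 n] at hM ⊢
  rw [kerVec_succ, (isHermitian_iff_isSymm.mp hA.isHermitian).snoc_dotProduct_border_inv_mulVec_snoc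
    hA.isUnit hM.isUnit, postVar, add_sub_left_comm, add_sub_assoc]

/-- Quadratic form with the block-inverted regularized kernel matrix: with
`A = K_n + σ² I_n`, `u = k_n(x_{n+1})`, `v = k_n(x)`, `α = κ(x_{n+1}, x)` and
`s = σ² + σ_n²(x_{n+1})`,
`k_{n+1}(x)ᵀ (K_{n+1} + σ² I_{n+1})⁻¹ k_{n+1}(x) = vᵀ A⁻¹ v + (α − uᵀ A⁻¹ v)² / s`. -/
theorem quadratic_form_block_inverse {D : Type*} [Nonempty D]
    (κ : D → D → ℝ)
    (hsymm : ∀ a b : D, κ a b = κ b a)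
    (hpsd : ∀ (n : ℕ) (z : Fin n → D),
      (Matrix.of fun i j => κ (z i) (z j)).PosSemidef)
    (σ2 : ℝ) (hσ2 : 0 < σ2)
    (xs : ℕ → D) (n : ℕ) (y : D) :
    kerVec κ xs (n + 1) y ⬝ᵥ
        ((kerMat κ xs (n + 1) + σ2 • (1 : Matrix (Fin (n + 1)) (Fin (n + 1)) ℝ))⁻¹ *ᵥ
          kerVec κ xs (n + 1) y) =
      kerVec κ xs n y ⬝ᵥ
          ((kerMat κ xs n + σ2 • (1 : Matrix (Fin n) (Fin n) ℝ))⁻¹ *ᵥ kerVec κ xs n y) +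
        (κ (xs n) y -
            kerVec κ xs n (xs n) ⬝ᵥ
              ((kerMat κ xs n + σ2 • (1 : Matrix (Fin n) (Fin n) ℝ))⁻¹ *ᵥ
                kerVec κ xs n y)) ^ 2 /
          (σ2 + postVar κ xs σ2 n (xs n)) :=
  quadratic_form_block_inverse_general κ hsymm hpsd σ2 hσ2 xs n y
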